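/- Let F, G be distribution functions, σ > 0, and let p_σ, q_σ be the densities of their Gaussian regularizations with parameter σ (convolutions with N(0,σ²)). Then sup_x |p_σ(x) − q_σ(x)| ≤ (L(F,G)/σ)·(1 + 1/(2σ)), where L is the Lévy distance. -/

import Mathlib

/-
Write φ' for the derivative of φ_σ. Since φ_σ(x - t) = ∫_t^∞ φ'(x - y) dy, Fubini gives
p_σ(x) = ∫ φ'(x - y) F(y) dy, hence |p_σ(x) - q_σ(x)| ≤ ∫ |φ'(x - y)| |F(y) - G(y)| dy.
For every h admissible in the definition of L(F, G) we have |F - G| ≤ G(· + h) - G(· - h) + h.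
Against the first term, |φ'| ≤ 1/(4σ²) and (again by Fubini) ∫ (G(y + h) - G(y - h)) dy = 2h;
against the second, ∫ |φ'| = 2 φ_σ(0) ≤ 1/σ. Taking the infimum over h gives the bound.
-/

open Real MeasureTheory Set ProbabilityTheory

/-- Density of N(0,σ²). -/
noncomputable def normalDensity (σ : ℝ) (x : ℝ) : ℝ :=
  (σ * Real.sqrt (2 * Real.pi))⁻¹ * Real.exp (-x ^ 2 / (2 * σ ^ 2))

/-- Lévy distance between two distribution functions. -/
noncomputable def levyDist (F G : ℝ → ℝ) : ℝ :=
  sInf {h : ℝ | 0 ≤ h ∧ ∀ x : ℝ, G (x - h) - h ≤ F x ∧ F x ≤ G (x + h) + h}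

open Filter Topology

theorem integral_mul_measureReal_setOf {α β : Type*} [MeasurableSpace α] [MeasurableSpace β]
    {μ : Measure α} {ν : Measure β} [SFinite μ] [IsFiniteMeasure ν] {r : α → β → Prop}
    (hr : MeasurableSet {p : α × β | r p.1 p.2}) {a : α → ℝ} (ha : Integrable a μ) :
    ∫ x, a x * ν.real {y | r x y} ∂μ = ∫ y, ∫ x in {x | r x y}, a x ∂μ ∂ν := by
  set f : α × β → ℝ := {p | r p.1 p.2}.indicator fun p => a p.1
  have hf : Integrable f (μ.prod ν) := (ha.comp_fst ν).indicator hr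
  calc ∫ x, a x * ν.real {y | r x y} ∂μ = ∫ x, ∫ y, f (x, y) ∂ν ∂μ := by
        congr 1; ext x
        rw [mul_comm, ← smul_eq_mul]
        exact (integral_indicator_const (a x) (measurable_prodMk_left hr)).symm
    _ = ∫ y, ∫ x, f (x, y) ∂μ ∂ν := integral_integral_swap hf
    _ = ∫ y, ∫ x in {x | r x y}, a x ∂μ ∂ν := by
        congr 1; ext y
        exact integral_indicator (measurable_prodMk_right hr)

theorem measureReal_Ioc_eq_cdf_sub_cdf (ν : Measure ℝ) [IsProbabilityMeasure ν] {a b : ℝ}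
    (hab : a ≤ b) : ν.real (Ioc a b) = cdf ν b - cdf ν a := by
  have h := (cdf ν).measure_Ioc a b
  rw [measure_cdf] at h
  rw [measureReal_def, h, ENNReal.toReal_ofReal (sub_nonneg.2 (monotone_cdf ν hab))]

theorem integral_setIntegral_Ici_eq_integral_mul_cdf {k : ℝ → ℝ} (hk : Integrable k)
    (μ : Measure ℝ) [IsProbabilityMeasure μ] :
    ∫ t, (∫ y in Ici t, k y) ∂μ = ∫ y, k y * cdf μ y := by
  simp_rw [cdf_eq_real]
  exact (integral_mul_measureReal_setOf (ν := μ) (r := fun y t => t ≤ y)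
    (measurableSet_le measurable_snd measurable_fst) hk).symm

theorem integral_mul_cdf_sub_cdf_le {a : ℝ → ℝ} (ha : Integrable a) (ha0 : 0 ≤ a) {M : ℝ}
    (haM : ∀ y, a y ≤ M) (ν : Measure ℝ) [IsProbabilityMeasure ν] {h : ℝ} (hh : 0 ≤ h) :
    ∫ y, a y * (cdf ν (y + h) - cdf ν (y - h)) ≤ 2 * h * M := by
  have hr : MeasurableSet {p : ℝ × ℝ | p.1 - h < p.2 ∧ p.2 ≤ p.1 + h} :=
    (measurableSet_lt (by fun_prop) measurable_snd).inter
      (measurableSet_le measurable_snd (by fun_prop))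
  have hsection : ∀ t, {y | y - h < t ∧ t ≤ y + h} = Ico (t - h) (t + h) := by
    intro t; ext y
    simp only [mem_ofPred_eq, mem_Ico]
    constructor <;> rintro ⟨h₁, h₂⟩ <;> constructor <;> linarith
  have hinner : ∀ t, ∫ y in Ico (t - h) (t + h), a y ≤ 2 * h * M := by
    intro t
    calc ∫ y in Ico (t - h) (t + h), a y ≤ ∫ _ in Ico (t - h) (t + h), M :=
          setIntegral_mono_on ha.integrableOn (integrableOn_const (by simp)) measurableSet_Ico
            fun y _ => haM y
      _ = 2 * h * M := by
          rw [setIntegral_const, smul_eq_mul, Real.volume_real_Ico_of_le (by linarith)]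
          ring
  calc ∫ y, a y * (cdf ν (y + h) - cdf ν (y - h))
      = ∫ y, a y * ν.real {t | y - h < t ∧ t ≤ y + h} := by
        congr 1; ext y
        rw [← measureReal_Ioc_eq_cdf_sub_cdf ν (by linarith)]
        rfl
    _ = ∫ t, (∫ y in Ico (t - h) (t + h), a y) ∂ν := by
        rw [integral_mul_measureReal_setOf (r := fun y t => y - h < t ∧ t ≤ y + h) hr ha]
        simp_rw [hsection]
    _ ≤ ∫ _, 2 * h * M ∂ν := integral_mono_of_nonneg
        (Eventually.of_forall fun t => setIntegral_nonneg measurableSet_Ico fun y _ => ha0 y)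
        (integrable_const _) (Eventually.of_forall hinner)
    _ = 2 * h * M := by simp

theorem abs_sub_le_of_levy {F G : ℝ → ℝ} (hG : Monotone G) {h : ℝ} (hh : 0 ≤ h)
    (hFG : ∀ x, G (x - h) - h ≤ F x ∧ F x ≤ G (x + h) + h) (x : ℝ) :
    |F x - G x| ≤ G (x + h) - G (x - h) + h := by
  obtain ⟨hlow, hup⟩ := hFG x
  have hleft := hG (sub_le_self x hh)
  have hright := hG (le_add_of_nonneg_right hh : x ≤ x + h)
  rw [abs_le]
  constructor <;> linarith

theorem le_levyDist_mul {F G : ℝ → ℝ} (hF : ∀ x, F x ∈ Icc (0 : ℝ) 1)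
    (hG : ∀ x, G x ∈ Icc (0 : ℝ) 1) {A c : ℝ} (hc : 0 < c)
    (hA : ∀ h, 0 ≤ h → (∀ x, G (x - h) - h ≤ F x ∧ F x ≤ G (x + h) + h) → A ≤ h * c) :
    A ≤ levyDist F G * c := by
  rw [← div_le_iff₀ hc]
  refine le_csInf ⟨1, zero_le_one, fun x => ⟨?_, ?_⟩⟩
    fun h ⟨hh, hFG⟩ => (div_le_iff₀ hc).2 (hA h hh hFG)
  · linarith [(hF x).1, (hG (x - 1)).2]
  · linarith [(hF x).2, (hG (x + 1)).1]

theorem MeasureTheory.Integrable.mul_cdf {k : ℝ → ℝ} (hk : Integrable k) (μ : Measure ℝ)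
    [IsProbabilityMeasure μ] : Integrable fun y => k y * cdf μ y :=
  hk.mul_bdd (monotone_cdf μ).measurable.aestronglyMeasurable <| ae_of_all _ fun y => by
    rw [Real.norm_of_nonneg (cdf_nonneg μ y)]
    exact cdf_le_one μ y

theorem abs_integral_mul_cdf_sub_le {k : ℝ → ℝ} (hk : Integrable k) {M : ℝ}
    (hkM : ∀ y, |k y| ≤ M) (μ ν : Measure ℝ) [IsProbabilityMeasure μ] [IsProbabilityMeasure ν]
    {h : ℝ} (hh : 0 ≤ h)
    (hFG : ∀ y, cdf ν (y - h) - h ≤ cdf μ y ∧ cdf μ y ≤ cdf ν (y + h) + h) :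
    |(∫ y, k y * cdf μ y) - ∫ y, k y * cdf ν y| ≤ 2 * h * M + h * ∫ y, |k y| := by
  set D := fun y => cdf ν (y + h) - cdf ν (y - h)
  have hkD : Integrable fun y => |k y| * D y := by
    have hD : Measurable D := ((monotone_cdf ν).measurable.comp (measurable_add_const h)).sub
      ((monotone_cdf ν).measurable.comp (measurable_sub_const h))
    refine hk.abs.mul_bdd (c := 1) hD.aestronglyMeasurable (ae_of_all _ fun y => ?_)
    have := monotone_cdf ν (by linarith : y - h ≤ y + h)
    rw [Real.norm_of_nonneg (sub_nonneg.2 this)]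
    linarith [cdf_le_one ν (y + h), cdf_nonneg ν (y - h)]
  rw [← integral_sub (hk.mul_cdf μ) (hk.mul_cdf ν)]
  calc |∫ y, (k y * cdf μ y - k y * cdf ν y)| ≤ ∫ y, (|k y| * D y + h * |k y|) := by
        refine abs_integral_le_integral_abs.trans <| integral_mono_of_nonneg
          (ae_of_all _ fun y => abs_nonneg _) (hkD.add (hk.abs.const_mul h))
          (ae_of_all _ fun y => ?_)
        have := abs_sub_le_of_levy (monotone_cdf ν) hh hFG y
        show |k y * cdf μ y - k y * cdf ν y| ≤ |k y| * D y + h * |k y|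
        rw [← mul_sub, abs_mul]
        nlinarith [abs_nonneg (k y)]
    _ = (∫ y, |k y| * D y) + h * ∫ y, |k y| := by
        rw [integral_add hkD (hk.abs.const_mul h), integral_const_mul]
    _ ≤ 2 * h * M + h * ∫ y, |k y| := by
        gcongr
        exact integral_mul_cdf_sub_cdf_le hk.abs (fun y => abs_nonneg _) hkM ν hh

section NormalDensity

variable {σ : ℝ}

theorem normalDensity_eq_mul_exp (σ u : ℝ) :
    normalDensity σ u = (σ * √(2 * π))⁻¹ * exp (-(2 * σ ^ 2)⁻¹ * u ^ 2) := by
  rw [normalDensity, neg_div, neg_mul, div_eq_inv_mul]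

theorem normalDensity_nonneg (hσ : 0 < σ) (u : ℝ) : 0 ≤ normalDensity σ u := by
  unfold normalDensity; positivity

theorem normalDensity_neg (σ u : ℝ) : normalDensity σ (-u) = normalDensity σ u := by
  simp [normalDensity]

theorem normalDensity_abs (σ u : ℝ) : normalDensity σ |u| = normalDensity σ u := by
  simp [normalDensity]

theorem tendsto_normalDensity_atBot (hσ : 0 < σ) : Tendsto (normalDensity σ) atBot (𝓝 0) := by
  have hsq : Tendsto (fun u : ℝ => u ^ 2) atBot atTop := by
    simpa [Function.comp_def] using
      (tendsto_pow_atTop two_ne_zero).comp (tendsto_neg_atBot_atTop (G := ℝ))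
  have hexp := tendsto_exp_atBot.comp
    ((tendsto_const_mul_atBot_of_neg (neg_neg_of_pos (by positivity : 0 < (2 * σ ^ 2)⁻¹))).2 hsq)
  rw [← mul_zero (σ * √(2 * π))⁻¹]
  exact (hexp.const_mul _).congr fun u => (normalDensity_eq_mul_exp σ u).symm

noncomputable def normalDensityDeriv (σ u : ℝ) : ℝ := -(u / σ ^ 2) * normalDensity σ u

theorem hasDerivAt_normalDensity (σ u : ℝ) :
    HasDerivAt (normalDensity σ) (normalDensityDeriv σ u) u := by
  have h := (((hasDerivAt_pow 2 u).fun_neg.div_const (2 * σ ^ 2)).exp).const_mul (σ * √(2 * π))⁻¹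
  refine h.congr_deriv ?_
  simp only [normalDensityDeriv, normalDensity]
  ring

theorem integrable_normalDensityDeriv (hσ : 0 < σ) : Integrable (normalDensityDeriv σ) := by
  have h := (integrable_mul_exp_neg_mul_sq (by positivity : 0 < (2 * σ ^ 2)⁻¹)).const_mul
    (-(σ ^ 2)⁻¹ * (σ * √(2 * π))⁻¹)
  convert h using 2 with u
  rw [normalDensityDeriv, normalDensity_eq_mul_exp]
  ring

theorem integral_Ioi_normalDensityDeriv_sub (hσ : 0 < σ) (x t : ℝ) :
    ∫ y in Ioi t, normalDensityDeriv σ (x - y) = normalDensity σ (x - t) := by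
  have hderiv : ∀ y ∈ Ici t, HasDerivAt (fun y => -normalDensity σ (x - y))
      (normalDensityDeriv σ (x - y)) y := fun y _ => by
    simpa using ((hasDerivAt_normalDensity σ (x - y)).comp_const_sub x y).fun_neg
  have hlim : Tendsto (fun y => -normalDensity σ (x - y)) atTop (𝓝 (-0)) :=
    ((tendsto_normalDensity_atBot hσ).comp (tendsto_atBot_add_const_left _ x
      tendsto_neg_atTop_atBot)).neg
  rw [integral_Ioi_of_hasDerivAt_of_tendsto' hderiv
    ((integrable_normalDensityDeriv hσ).comp_sub_left x).integrableOn hlim]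
  ring

theorem integral_abs_normalDensityDeriv (hσ : 0 < σ) :
    ∫ u, |normalDensityDeriv σ u| = 2 * normalDensity σ 0 := by
  -- φ' is odd and negative on (0, ∞), so ∫ |φ'| = 2 ∫_0^∞ φ'(0 - v) dv = 2 φ(0).
  have h : ∀ u, |normalDensityDeriv σ u| = normalDensityDeriv σ (0 - |u|) := fun u => by
    simp only [normalDensityDeriv, zero_sub, normalDensity_neg, normalDensity_abs, abs_mul,
      abs_neg, abs_div, abs_sq, abs_of_nonneg (normalDensity_nonneg hσ u)]
    ring
  simp_rw [h]
  rw [integral_comp_abs (f := fun v => normalDensityDeriv σ (0 - v)),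
    integral_Ioi_normalDensityDeriv_sub hσ, sub_zero]

theorem two_mul_normalDensity_zero_le (hσ : 0 < σ) : 2 * normalDensity σ 0 ≤ 1 / σ := by
  have hπ : 2 ≤ √(2 * π) := Real.le_sqrt_of_sq_le (by nlinarith [pi_gt_three])
  calc 2 * normalDensity σ 0 = 2 / √(2 * π) * (1 / σ) := by
        simp only [normalDensity]; field_simp; simp
    _ ≤ 1 * (1 / σ) := by gcongr; rwa [div_le_one (by positivity)]
    _ = 1 / σ := one_mul _

theorem abs_normalDensityDeriv_le (hσ : 0 < σ) (u : ℝ) :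
    |normalDensityDeriv σ u| ≤ 1 / (4 * σ ^ 2) := by
  refine abs_le_of_sq_le_sq ?_ (by positivity)
  have hsq : normalDensityDeriv σ u ^ 2
      = u ^ 2 / σ ^ 2 * exp (-(u ^ 2 / σ ^ 2)) / (2 * π * σ ^ 4) := by
    rw [normalDensityDeriv, normalDensity, mul_pow, mul_pow, inv_pow, mul_pow,
      sq_sqrt (by positivity), ← exp_nat_mul]
    field_simp
    ring_nf
  have hmax : u ^ 2 / σ ^ 2 * exp (-(u ^ 2 / σ ^ 2)) ≤ exp (-1) := mul_exp_neg_le_exp_neg_one _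
  have hnum : exp (-1) * 16 ≤ 2 * π := by linarith [exp_neg_one_lt_d9, pi_gt_d2]
  rw [hsq, div_le_iff₀ (by positivity)]
  calc u ^ 2 / σ ^ 2 * exp (-(u ^ 2 / σ ^ 2)) ≤ 2 * π / 16 := by linarith
    _ = (1 / (4 * σ ^ 2)) ^ 2 * (2 * π * σ ^ 4) := by field_simp; ring

theorem integral_normalDensity_sub_eq (hσ : 0 < σ) (μ : Measure ℝ) [IsProbabilityMeasure μ]
    (x : ℝ) :
    ∫ y, normalDensity σ (x - y) ∂μ = ∫ y, normalDensityDeriv σ (x - y) * cdf μ y := by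
  calc ∫ t, normalDensity σ (x - t) ∂μ = ∫ t, (∫ y in Ici t, normalDensityDeriv σ (x - y)) ∂μ := by
        congr 1; ext t
        rw [integral_Ici_eq_integral_Ioi, integral_Ioi_normalDensityDeriv_sub hσ]
    _ = _ := integral_setIntegral_Ici_eq_integral_mul_cdf
        ((integrable_normalDensityDeriv hσ).comp_sub_left x) μ

theorem abs_integral_normalDensity_sub_le (hσ : 0 < σ) (μ ν : Measure ℝ)
    [IsProbabilityMeasure μ] [IsProbabilityMeasure ν] (x : ℝ) {h : ℝ} (hh : 0 ≤ h)
    (hFG : ∀ y, cdf ν (y - h) - h ≤ cdf μ y ∧ cdf μ y ≤ cdf ν (y + h) + h) :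
    |∫ y, normalDensity σ (x - y) ∂μ - ∫ y, normalDensity σ (x - y) ∂ν|
      ≤ h * ((1 + 1 / (2 * σ)) / σ) := by
  have hk_abs : ∫ y, |normalDensityDeriv σ (x - y)| ≤ 1 / σ := by
    rw [integral_sub_left_eq_self (fun u => |normalDensityDeriv σ u|) volume x,
      integral_abs_normalDensityDeriv hσ]
    exact two_mul_normalDensity_zero_le hσ
  rw [integral_normalDensity_sub_eq hσ μ, integral_normalDensity_sub_eq hσ ν]
  calc _ ≤ 2 * h * (1 / (4 * σ ^ 2)) + h * ∫ y, |normalDensityDeriv σ (x - y)| :=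
        abs_integral_mul_cdf_sub_le ((integrable_normalDensityDeriv hσ).comp_sub_left x)
          (fun y => abs_normalDensityDeriv_le hσ _) μ ν hh hFG
    _ ≤ 2 * h * (1 / (4 * σ ^ 2)) + h * (1 / σ) := by gcongr
    _ = h * ((1 + 1 / (2 * σ)) / σ) := by field_simp; ring

end NormalDensity

theorem stmt_18 (μ ν : Measure ℝ) [IsProbabilityMeasure μ] [IsProbabilityMeasure ν]
    (σ : ℝ) (hσ : 0 < σ) :
    (⨆ x : ℝ, |(∫ y, normalDensity σ (x - y) ∂μ) - ∫ y, normalDensity σ (x - y) ∂ν|)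
      ≤ (levyDist (fun x => cdf μ x) (fun x => cdf ν x) / σ) * (1 + 1 / (2 * σ)) := by
  calc (⨆ x : ℝ, |(∫ y, normalDensity σ (x - y) ∂μ) - ∫ y, normalDensity σ (x - y) ∂ν|)
      ≤ levyDist (fun x => cdf μ x) (fun x => cdf ν x) * ((1 + 1 / (2 * σ)) / σ) :=
        le_levyDist_mul (fun x => ⟨cdf_nonneg μ x, cdf_le_one μ x⟩)
          (fun x => ⟨cdf_nonneg ν x, cdf_le_one ν x⟩) (by positivity)
          fun _ hh hFG => ciSup_le fun x => abs_integral_normalDensity_sub_le hσ μ ν x hh hFG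
    _ = (levyDist (fun x => cdf μ x) (fun x => cdf ν x) / σ) * (1 + 1 / (2 * σ)) := by ring
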